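/- arXiv:1609.00852 — 2 statements merged into one kernel-verified Lean document; each statement's English description precedes it below -/
import Mathlib

section
/- The sequence f(t) = c_0 (t+1)^γ ∑_{i=t+1}^{M} (1/i)^γ + t·c_{C_0}, for t = 1,...,M-1, is strictly concave as a sequence: f(t+1) + f(t-1) - 2f(t) < 0 for all 2 ≤ t ≤ M-2, whenever c_0 > 0, c_{C_0} ∈ ℝ, and γ ∈ (0,1). -/
set_option maxHeartbeats 1000000


/-- The sequence `f(t) = c_0 (t+1)^γ ∑_{i=t+1}^{M} i^{-γ} + t·c_{C_0}` is strictly concave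
as a sequence: `f(t+1) + f(t-1) - 2 f(t) < 0` for `2 ≤ t ≤ M-2`. -/
theorem f_strictly_concave_sequence (M : ℕ) (hM : 4 ≤ M) (γ : ℝ) (hγ0 : 0 < γ) (hγ1 : γ < 1)
    (c₀ cC₀ : ℝ) (hc₀ : 0 < c₀) (f : ℕ → ℝ)
    (hf : ∀ t, f t = c₀ * ((t : ℝ) + 1) ^ γ * (∑ i ∈ Finset.Icc (t + 1) M, (i : ℝ) ^ (-γ))
        + (t : ℝ) * cC₀)
    (t : ℕ) (ht2 : 2 ≤ t) (htM : t ≤ M - 2) :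
    f (t + 1) + f (t - 1) - 2 * f t < 0 := by
  have hM2 : t + 2 ≤ M := by omega
  set S : ℕ → ℝ := fun s => ∑ i ∈ Finset.Icc (s + 1) M, (i : ℝ) ^ (-γ) with hS
  have hins : ∀ s : ℕ, s + 1 ≤ M → S s = ((s + 1 : ℕ) : ℝ) ^ (-γ) + S (s + 1) := by
    intro s hs
    have hset : Finset.Icc (s + 1) M = insert (s + 1) (Finset.Icc (s + 2) M) := by
      ext x; simp; omega
    simp only [hS]
    rw [hset, Finset.sum_insert (by simp)]
  have htpos : (0 : ℝ) < (t : ℝ) := by exact_mod_cast Nat.pos_of_ne_zero (by omega)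
  have ht1 : (t - 1) + 1 = t := by omega
  have hcast1 : ((t - 1 : ℕ) : ℝ) = (t : ℝ) - 1 := by
    push_cast [Nat.cast_sub (by omega : 1 ≤ t)]; ring
  have hft1 : f (t + 1) = c₀ * ((t : ℝ) + 2) ^ γ * S (t + 1) + ((t : ℝ) + 1) * cC₀ := by
    rw [hf (t + 1)]; simp only [hS]; push_cast; ring_nf
  have hft : f t = c₀ * ((t : ℝ) + 1) ^ γ * S t + (t : ℝ) * cC₀ := hf t
  have hftm : f (t - 1) = c₀ * (t : ℝ) ^ γ * S (t - 1) + ((t : ℝ) - 1) * cC₀ := by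
    rw [hf (t - 1), hcast1, hS]
    norm_num [ht1]
  have hSm : S (t - 1) = (t : ℝ) ^ (-γ) + S t := by
    have h := hins (t - 1) (by omega)
    rw [ht1] at h
    rw [h]
  have hSt : S t = ((t : ℝ) + 1) ^ (-γ) + S (t + 1) := by
    have h := hins t (by omega)
    rw [h]; push_cast; ring_nf
  -- abbreviations
  set S₁ := S (t + 1) with hS₁def
  set P := (t : ℝ) ^ γ with hP
  set Q := ((t : ℝ) + 1) ^ γ with hQ
  set R := ((t : ℝ) + 2) ^ γ with hR
  set p := (t : ℝ) ^ (-γ) with hp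
  set q := ((t : ℝ) + 1) ^ (-γ) with hq
  -- facts
  have hS₁nonneg : 0 ≤ S₁ := Finset.sum_nonneg fun i _ => by positivity
  have hPp : P * p = 1 := by
    rw [hP, hp, Real.rpow_neg htpos.le]
    exact mul_inv_cancel₀ (by positivity)
  have hQq : Q * q = 1 := by
    rw [hQ, hq, Real.rpow_neg (by linarith)]
    exact mul_inv_cancel₀ (by positivity)
  have hqpos : 0 < q := by rw [hq]; positivity
  have hPQ : P < Q := Real.rpow_lt_rpow htpos.le (by linarith) hγ0
  -- strict concavity gives P + R < 2 Q
  have hconc := (Real.strictConcaveOn_rpow hγ0 hγ1).2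
    (Set.mem_Ici.mpr htpos.le) (Set.mem_Ici.mpr (by linarith : (0:ℝ) ≤ (t : ℝ) + 2))
    (by linarith : (t : ℝ) ≠ (t : ℝ) + 2)
    (by norm_num : (0:ℝ) < 1/2) (by norm_num : (0:ℝ) < 1/2) (by norm_num)
  have hmid : (1/2 : ℝ) • (t : ℝ) + (1/2 : ℝ) • ((t : ℝ) + 2) = (t : ℝ) + 1 := by
    simp [smul_eq_mul]; ring
  rw [hmid] at hconc
  simp only [smul_eq_mul] at hconc
  have hD : P + R < 2 * Q := by rw [hP, hQ, hR]; nlinarith [hconc]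
  -- final computation
  rw [hft1, hft, hftm, hSm, hSt]
  have hinner : R * S₁ + P * (p + (q + S₁)) - 2 * (Q * (q + S₁)) < 0 := by
    nlinarith [mul_nonneg hS₁nonneg (by linarith : (0:ℝ) ≤ 2 * Q - P - R),
      mul_lt_mul_of_pos_right hPQ hqpos]
  nlinarith [mul_pos hc₀ (by linarith : 0 < -(R * S₁ + P * (p + (q + S₁)) - 2 * (Q * (q + S₁))))]
end

section
/- For γ ∈ (0,1] and 1 ≤ t ≤ M-1, the weighted tail sum h(t) = (t+1)^γ ∑_{i=t+1}^{M} i^{-γ} is strictly decreasing in differences in the sense that its discrete second difference is negative: h(t+1) + h(t-1) - 2h(t) < 0 for all 2 ≤ t ≤ M-2. -/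
/-- For `γ ∈ (0,1]`, the weighted tail sum `h(t) = (t+1)^γ ∑_{i=t+1}^{M} i^{-γ}` has
strictly negative discrete second difference: `h(t+1) + h(t-1) - 2h(t) < 0` for
`2 ≤ t ≤ M-2`. -/
theorem weighted_tail_sum_concave (M : ℕ) (hM : 4 ≤ M) (γ : ℝ) (hγ0 : 0 < γ) (hγ1 : γ ≤ 1)
    (h : ℕ → ℝ)
    (hh : ∀ t, h t = ((t : ℝ) + 1) ^ γ * (∑ i ∈ Finset.Icc (t + 1) M, (i : ℝ) ^ (-γ)))
    (t : ℕ) (ht2 : 2 ≤ t) (htM : t ≤ M - 2) :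
    h (t + 1) + h (t - 1) - 2 * h t < 0 := by
  have htM' : t + 2 ≤ M := by omega
  -- tail sum
  set T : ℝ := ∑ i ∈ Finset.Icc (t + 2) M, (i : ℝ) ^ (-γ) with hT
  have hT0 : 0 ≤ T := Finset.sum_nonneg fun i _ => Real.rpow_nonneg (Nat.cast_nonneg i) _
  have ht0 : (0:ℝ) < (t:ℝ) := by exact_mod_cast (by omega : 0 < t)
  have ht10 : (0:ℝ) < (t:ℝ) + 1 := by linarith
  -- split sums
  have hins1 : Finset.Icc (t + 1) M = insert (t + 1) (Finset.Icc (t + 2) M) := by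
    ext i; simp only [Finset.mem_Icc, Finset.mem_insert]; omega
  have hins2 : Finset.Icc t M = insert t (Finset.Icc (t + 1) M) := by
    ext i; simp only [Finset.mem_Icc, Finset.mem_insert]; omega
  have hsplit1 : ∑ i ∈ Finset.Icc (t + 1) M, (i : ℝ) ^ (-γ)
      = ((t:ℝ) + 1) ^ (-γ) + T := by
    rw [hins1, Finset.sum_insert (by simp)]
    push_cast; rfl
  have hsplit2 : ∑ i ∈ Finset.Icc t M, (i : ℝ) ^ (-γ)
      = (t:ℝ) ^ (-γ) + (((t:ℝ) + 1) ^ (-γ) + T) := by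
    rw [hins2, Finset.sum_insert (by simp), hsplit1]
  have e1 : h (t + 1) = ((t:ℝ) + 2) ^ γ * T := by
    rw [hh, ← hT]; push_cast; ring_nf
  have e2 : h t = ((t:ℝ) + 1) ^ γ * (((t:ℝ) + 1) ^ (-γ) + T) := by
    rw [hh, hsplit1]
  have e3 : h (t - 1) = (t:ℝ) ^ γ * ((t:ℝ) ^ (-γ) + (((t:ℝ) + 1) ^ (-γ) + T)) := by
    rw [hh]
    have : t - 1 + 1 = t := by omega
    rw [this, hsplit2]
    have : ((t - 1 : ℕ) : ℝ) + 1 = (t : ℝ) := by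
      have : (t : ℝ) - 1 + 1 = (t : ℝ) := by ring
      rw [← this]; congr 1
      push_cast [Nat.cast_sub (by omega : 1 ≤ t)]; ring
    rw [this]
  have cancel1 : ((t:ℝ) + 1) ^ γ * ((t:ℝ) + 1) ^ (-γ) = 1 := by
    rw [← Real.rpow_add ht10]; simp
  have cancel2 : (t:ℝ) ^ γ * (t:ℝ) ^ (-γ) = 1 := by
    rw [← Real.rpow_add ht0]; simp
  -- concavity: t^γ + (t+2)^γ ≤ 2*(t+1)^γ
  have hconc : (t:ℝ) ^ γ + ((t:ℝ) + 2) ^ γ ≤ 2 * ((t:ℝ) + 1) ^ γ := by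
    have := (Real.concaveOn_rpow hγ0.le hγ1).2
      (Set.mem_Ici.mpr ht0.le)
      (Set.mem_Ici.mpr (show (0:ℝ) ≤ (t:ℝ) + 2 by linarith))
      (show (0:ℝ) ≤ 1/2 by norm_num) (show (0:ℝ) ≤ 1/2 by norm_num)
      (show (1/2:ℝ) + 1/2 = 1 by norm_num)
    simp only [smul_eq_mul] at this
    have h2 : (1/2 : ℝ) * (t:ℝ) + 1/2 * ((t:ℝ) + 2) = (t:ℝ) + 1 := by ring
    rw [h2] at this
    linarith
  -- t^γ * (t+1)^{-γ} < 1
  have hratio : (t:ℝ) ^ γ * ((t:ℝ) + 1) ^ (-γ) < 1 := by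
    have hlt : (t:ℝ) ^ γ < ((t:ℝ) + 1) ^ γ :=
      Real.rpow_lt_rpow ht0.le (by linarith) hγ0
    have hpos : 0 < ((t:ℝ) + 1) ^ (-γ) := Real.rpow_pos_of_pos ht10 _
    calc (t:ℝ) ^ γ * ((t:ℝ) + 1) ^ (-γ)
        < ((t:ℝ) + 1) ^ γ * ((t:ℝ) + 1) ^ (-γ) := by
          exact mul_lt_mul_of_pos_right hlt hpos
      _ = 1 := cancel1
  have key : h (t + 1) + h (t - 1) - 2 * h t
      = (((t:ℝ) ^ γ + ((t:ℝ) + 2) ^ γ - 2 * ((t:ℝ) + 1) ^ γ) * T)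
        + ((t:ℝ) ^ γ * ((t:ℝ) + 1) ^ (-γ) - 1) := by
    rw [e1, e2, e3]
    nlinarith [cancel1, cancel2]
  rw [key]
  have h1 : (((t:ℝ) ^ γ + ((t:ℝ) + 2) ^ γ - 2 * ((t:ℝ) + 1) ^ γ) * T) ≤ 0 :=
    mul_nonpos_of_nonpos_of_nonneg (by linarith) hT0
  linarith
end
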